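/- Componentwise majorization (Condition 1 for the proposed surrogate): Fix a row vector B_i ∈ ℝ^{1×m}, a symmetric matrix D^(i) ∈ ℝ^{m×m}, and a scalar b̂_i ∈ ℝ. For w ∈ ℝ^m set g_i := B_i w + wᵀ D^(i) w − b̂_i and h_i := B_i + 2 wᵀ D^(i), and define φ_i(u) := (B_i u + uᵀ D^(i) u − b̂_i)² and ψ_i(v) := g_i² + 2 g_i ∑_{j=1}^m h_{ij} v_j + 2 (g_i λ_M(D^(i), g_i) + ‖h_i‖²) ∑_{j=1}^m v_j² + 2 m σ(D^(i))² ∑_{j=1}^m v_j⁴. Then φ_i(w + v) ≤ ψ_i(v) for every v ∈ ℝ^m. -/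

import Mathlib

/-!
Write `s = ⟪h, v⟫` and `q = vᵀ D v`. Since `D` is symmetric, `φ (w + v) = (g + s + q)²`, and
`(s + q)² ≤ 2 s² + 2 q²` leaves three terms to bound: `g q ≤ g λ_M(D, g) ‖v‖²` by the Rayleigh
bounds (the sign of `g` decides which extreme eigenvalue is needed), `s² ≤ ‖h‖² ‖v‖²` by
Cauchy–Schwarz, and `q² ≤ σ(D)² ‖v‖⁴ ≤ m σ(D)² ∑ v_j⁴` by the operator-norm bound followed by
Cauchy–Schwarz for the vector `(v_j²)_j`.
-/

/-- The smallest eigenvalue of a real symmetric (Hermitian) matrix. -/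
noncomputable def lamMin {m : ℕ} {D : Matrix (Fin m) (Fin m) ℝ} (hD : D.IsHermitian) : ℝ :=
  ⨅ i, hD.eigenvalues i

/-- The largest eigenvalue of a real symmetric (Hermitian) matrix. -/
noncomputable def lamMax {m : ℕ} {D : Matrix (Fin m) (Fin m) ℝ} (hD : D.IsHermitian) : ℝ :=
  ⨆ i, hD.eigenvalues i

/-- `λ_M(D, g)`: the smallest eigenvalue if `g < 0`, the largest if `g ≥ 0`. -/
noncomputable def lamM {m : ℕ} {D : Matrix (Fin m) (Fin m) ℝ} (hD : D.IsHermitian)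
    (g : ℝ) : ℝ :=
  if g < 0 then lamMin hD else lamMax hD

/-- `σ(D)`: the largest singular value of `D`, i.e. the operator norm of `D`
with respect to the Euclidean norm. -/
noncomputable def sigmaOp {m : ℕ} (D : Matrix (Fin m) (Fin m) ℝ) : ℝ :=
  ‖Matrix.toEuclideanCLM (𝕜 := ℝ) D‖

open Matrix
open scoped RealInnerProductSpace

theorem Matrix.IsSymm.add_dotProduct_mulVec_add {n R : Type*} [Fintype n] [CommRing R]
    {D : Matrix n n R} (hD : D.IsSymm) (x y : n → R) :
    (x + y) ⬝ᵥ D *ᵥ (x + y) = x ⬝ᵥ D *ᵥ x + (2 • x ᵥ* D) ⬝ᵥ y + y ⬝ᵥ D *ᵥ y := by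
  have hyx : y ⬝ᵥ D *ᵥ x = (x ᵥ* D) ⬝ᵥ y := by
    rw [dotProduct_mulVec, dotProduct_comm, ← mulVec_transpose, hD.eq, dotProduct_mulVec]
  rw [mulVec_add, dotProduct_add, add_dotProduct, add_dotProduct, hyx, smul_dotProduct,
    ← dotProduct_mulVec, two_smul]
  abel

theorem EuclideanSpace.sq_norm_sq_le_card_mul_sum_pow_four {n : Type*} [Fintype n]
    (v : EuclideanSpace ℝ n) : (‖v‖ ^ 2) ^ 2 ≤ Fintype.card n * ∑ j, v j ^ 4 := by
  have := sq_sum_le_card_mul_sum_sq (s := Finset.univ) (f := fun j => v j ^ 2)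
  simp_rw [← pow_mul] at this
  simpa [EuclideanSpace.real_norm_sq_eq] using this

theorem EuclideanSpace.sq_dotProduct_le_norm_sq_mul_norm_sq {n : Type*} [Fintype n]
    (x y : EuclideanSpace ℝ n) : (x.ofLp ⬝ᵥ y.ofLp) ^ 2 ≤ ‖x‖ ^ 2 * ‖y‖ ^ 2 := by
  rw [dotProduct_comm, ← star_trivial x.ofLp, ← EuclideanSpace.inner_eq_star_dotProduct,
    ← mul_pow, ← sq_abs]
  gcongr
  exact abs_real_inner_le_norm x y

namespace Matrix.IsHermitian

variable {n : Type*} [Fintype n] [DecidableEq n] {D : Matrix n n ℝ} (hD : D.IsHermitian)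

theorem toEuclideanCLM_eigenvectorBasis (i : n) :
    toEuclideanCLM (𝕜 := ℝ) D (hD.eigenvectorBasis i) = hD.eigenvalues i • hD.eigenvectorBasis i :=
  WithLp.ofLp_injective 2 (by simpa using hD.mulVec_eigenvectorBasis i)

theorem dotProduct_mulVec_eq_sum_eigenvalues (v : EuclideanSpace ℝ n) :
    v ⬝ᵥ D *ᵥ v = ∑ i, hD.eigenvalues i * ⟪hD.eigenvectorBasis i, v⟫ ^ 2 := by
  have hT : ∀ x y, ⟪toEuclideanCLM (𝕜 := ℝ) D x, y⟫ = ⟪x, toEuclideanCLM (𝕜 := ℝ) D y⟫ :=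
    isSymmetric_toEuclideanLin_iff.mpr hD
  rw [← inner_toEuclideanCLM, ← hD.eigenvectorBasis.sum_inner_mul_inner]
  refine Finset.sum_congr rfl fun i _ => ?_
  rw [← hT, toEuclideanCLM_eigenvectorBasis hD, real_inner_smul_left, real_inner_comm v]
  ring

theorem mul_norm_sq_le_dotProduct_mulVec {c : ℝ} (hc : ∀ i, c ≤ hD.eigenvalues i)
    (v : EuclideanSpace ℝ n) : c * ‖v‖ ^ 2 ≤ v ⬝ᵥ D *ᵥ v := by
  rw [hD.dotProduct_mulVec_eq_sum_eigenvalues, ← hD.eigenvectorBasis.sum_sq_inner_right,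
    Finset.mul_sum]
  exact Finset.sum_le_sum fun i _ => mul_le_mul_of_nonneg_right (hc i) (sq_nonneg _)

theorem dotProduct_mulVec_le_mul_norm_sq {c : ℝ} (hc : ∀ i, hD.eigenvalues i ≤ c)
    (v : EuclideanSpace ℝ n) : v ⬝ᵥ D *ᵥ v ≤ c * ‖v‖ ^ 2 := by
  rw [hD.dotProduct_mulVec_eq_sum_eigenvalues, ← hD.eigenvectorBasis.sum_sq_inner_right,
    Finset.mul_sum]
  exact Finset.sum_le_sum fun i _ => mul_le_mul_of_nonneg_right (hc i) (sq_nonneg _)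

end Matrix.IsHermitian

section

variable {m : ℕ} {D : Matrix (Fin m) (Fin m) ℝ}

theorem lamMin_le_eigenvalues (hD : D.IsHermitian) (i : Fin m) : lamMin hD ≤ hD.eigenvalues i :=
  ciInf_le (Set.finite_range _).bddBelow i

theorem eigenvalues_le_lamMax (hD : D.IsHermitian) (i : Fin m) : hD.eigenvalues i ≤ lamMax hD :=
  le_ciSup (Set.finite_range _).bddAbove i

theorem mul_dotProduct_mulVec_le_lamM (hD : D.IsHermitian) (g : ℝ) (v : EuclideanSpace ℝ (Fin m)) :
    g * (v ⬝ᵥ D *ᵥ v) ≤ g * lamM hD g * ‖v‖ ^ 2 := by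
  rw [lamM, mul_assoc]
  split_ifs with hg
  · exact mul_le_mul_of_nonpos_left
      (hD.mul_norm_sq_le_dotProduct_mulVec (lamMin_le_eigenvalues hD) v) hg.le
  · exact mul_le_mul_of_nonneg_left
      (hD.dotProduct_mulVec_le_mul_norm_sq (eigenvalues_le_lamMax hD) v) (not_lt.mp hg)

end

section

variable {m : ℕ} (D : Matrix (Fin m) (Fin m) ℝ) (v : EuclideanSpace ℝ (Fin m))

theorem abs_dotProduct_mulVec_le_sigmaOp : |v ⬝ᵥ D *ᵥ v| ≤ sigmaOp D * ‖v‖ ^ 2 := by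
  rw [← inner_toEuclideanCLM]
  calc |⟪v, toEuclideanCLM (𝕜 := ℝ) D v⟫| ≤ ‖v‖ * ‖toEuclideanCLM (𝕜 := ℝ) D v‖ :=
        abs_real_inner_le_norm _ _
    _ ≤ ‖v‖ * (sigmaOp D * ‖v‖) := by gcongr; exact (toEuclideanCLM (𝕜 := ℝ) D).le_opNorm v
    _ = sigmaOp D * ‖v‖ ^ 2 := by ring

theorem sq_dotProduct_mulVec_le_sigmaOp_sq_mul_sum_pow_four :
    (v ⬝ᵥ D *ᵥ v) ^ 2 ≤ sigmaOp D ^ 2 * (m * ∑ j, v j ^ 4) :=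
  calc (v ⬝ᵥ D *ᵥ v) ^ 2 ≤ (sigmaOp D * ‖v‖ ^ 2) ^ 2 := by
        rw [← sq_abs]; gcongr; exact abs_dotProduct_mulVec_le_sigmaOp D v
    _ = sigmaOp D ^ 2 * (‖v‖ ^ 2) ^ 2 := by ring
    _ ≤ sigmaOp D ^ 2 * (m * ∑ j, v j ^ 4) := by
        gcongr; simpa using EuclideanSpace.sq_norm_sq_le_card_mul_sum_pow_four v

end

/-- Componentwise majorization (Condition 1 for the proposed surrogate). -/
theorem componentwise_majorization {m : ℕ} (B : Fin m → ℝ)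
    (D : Matrix (Fin m) (Fin m) ℝ) (hD : D.IsHermitian) (bhat : ℝ)
    (w v : EuclideanSpace ℝ (Fin m)) :
    let g : ℝ := dotProduct B w + dotProduct w (D.mulVec w) - bhat
    let h : EuclideanSpace ℝ (Fin m) := WithLp.toLp 2 (fun j => B j + 2 * Matrix.vecMul w D j : Fin m → ℝ)
    let φ : EuclideanSpace ℝ (Fin m) → ℝ := fun u =>
      (dotProduct B u + dotProduct u (D.mulVec u) - bhat) ^ 2
    let ψ : EuclideanSpace ℝ (Fin m) → ℝ := fun u =>
      g ^ 2 + 2 * g * ∑ j, h j * u j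
        + 2 * (g * lamM hD g + ‖h‖ ^ 2) * ∑ j, u j ^ 2
        + 2 * m * sigmaOp D ^ 2 * ∑ j, u j ^ 4
    φ (w + v) ≤ ψ v := by
  intro g h φ ψ
  set s := h.ofLp ⬝ᵥ v.ofLp with hs
  set q := v ⬝ᵥ D *ᵥ v
  have hexpand : φ (w + v) = (g + s + q) ^ 2 := by
    have hh : h.ofLp = B + 2 • w ᵥ* D := by ext j; simp [h]
    simp only [φ, g, hs, hh, WithLp.ofLp_add, dotProduct_add, add_dotProduct,
      (isHermitian_iff_isSymm.mp hD).add_dotProduct_mulVec_add]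
    ring
  have hψ : ψ v = g ^ 2 + 2 * g * s + 2 * (g * lamM hD g + ‖h‖ ^ 2) * ‖v‖ ^ 2
      + 2 * m * sigmaOp D ^ 2 * ∑ j, v j ^ 4 := by
    rw [EuclideanSpace.real_norm_sq_eq v]
    rfl
  have hgq := mul_dotProduct_mulVec_le_lamM hD g v
  have hs2 := EuclideanSpace.sq_dotProduct_le_norm_sq_mul_norm_sq h v
  have hq2 := sq_dotProduct_mulVec_le_sigmaOp_sq_mul_sum_pow_four D v
  rw [hexpand, hψ]
  linarith [sq_nonneg (s - q)]
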